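/- arXiv:1812.06206 — 2 statements merged into one kernel-verified Lean document; each statement's English description precedes it below -/
import Mathlib

section
/- Let k be a commutative unital ring, D = (D_0, D_1, …) a Hasse–Schmidt derivation of k, and F a formal group law over k. Suppose D is an HS F-derivation, i.e. Σ_{i,j≥0} D_j(D_i(u)) X^i Y^j = Σ_{n≥0} D_n(u) · F(X,Y)^n in k[[X,Y]] for all u ∈ k. Then defining Y(u,z)v := Σ_{n≥0} D_n(u) v z^n, the weak associativity identity Y(Y(a,z)b, w)c = Y(a, F(z,w)) Y(b,w) c holds in k[[z,w]] for all a, b, c ∈ k. -/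
/-!
The `F`-derivation identity says that the coefficient of `z^i w^j` in `Y(a, F(z,w))` is
`D_j (D_i a)`. Since `Y(b,w)c` involves only `w`, the coefficient of `z^i w^j` on the right is
`Σ_{p+q=j} D_p (D_i a) D_q b c`, which is the Leibniz expansion of `D_j (D_i a * b) c`.
-/

namespace HS
variable {k : Type*} [CommRing k] {σ : Type*}

/-- A Hasse-Schmidt derivation of `k`: a sequence of additive endomorphisms with
`D 0 = id`, `D m 1 = 0` for `m ≥ 1`, and the Leibniz rule. -/
structure IsHSDer (D : ℕ → k → k) : Prop where
  add : ∀ n u v, D n (u + v) = D n u + D n v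
  zeroth : ∀ u, D 0 u = u
  map_one : ∀ m, 1 ≤ m → D m 1 = 0
  leibniz : ∀ m u v, D m (u * v) = ∑ p ∈ Finset.HasAntidiagonal.antidiagonal m, D p.1 u * D p.2 v

/-- Iterativity: `D i ∘ D j = C(i+j, i) • D (i+j)`. -/
def Iterative (D : ℕ → k → k) : Prop :=
  ∀ i j u, D i (D j u) = (i + j).choose i • D (i + j) u

/-- The series `Σ_n (c n) • G^n` for `G` of zero constant term, defined coefficientwise. -/
noncomputable def ssum (c : ℕ → k) (G : MvPowerSeries σ k) : MvPowerSeries σ k :=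
  fun d => ∑ n ∈ Finset.range ((d.sum fun _ m => m) + 1),
    c n * MvPowerSeries.coeff d (G ^ n)

/-- `D` is an HS `F`-derivation:
`Σ_{i,j} D_j (D_i u) X^i Y^j = Σ_n (D_n u) F(X,Y)^n` for all `u`. -/
def IsFDer (D : ℕ → k → k) (F : MvPowerSeries (Fin 2) k) : Prop :=
  ∀ u : k, (fun d : Fin 2 →₀ ℕ => D (d 1) (D (d 0) u)) = ssum (fun n => D n u) F

/-- View a coefficient function as a multivariate power series. -/
def ofFun (f : (Fin 2 →₀ ℕ) → k) : MvPowerSeries (Fin 2) k := f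

open Finset Finsupp MvPowerSeries

@[simp]
theorem coeff_ofFun (f : (Fin 2 →₀ ℕ) → k) (d : Fin 2 →₀ ℕ) : coeff d (ofFun f) = f d := rfl

theorem coeff_mul_ofFun_of_apply_zero_eq_zero (φ : MvPowerSeries (Fin 2) k) (g : ℕ → k)
    (d : Fin 2 →₀ ℕ) :
    coeff d (φ * ofFun fun e => if e 0 = 0 then g (e 1) else 0) =
      ∑ q ∈ antidiagonal (d 1), coeff (single 0 (d 0) + single 1 q.1) φ * g q.2 := by
  rw [coeff_mul]
  -- The terms `(e, f)` with `f 0 ≠ 0` vanish; the others are indexed by `(e 1, f 1)`.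
  symm
  refine sum_of_injOn (fun q => (single 0 (d 0) + single 1 q.1, single 1 q.2)) ?_ ?_ ?_ ?_
  · intro q _ q' _ h
    simpa using congr_arg (fun p => (p.1 1, p.2 1)) h
  · intro q hq
    rw [mem_coe, HasAntidiagonal.mem_antidiagonal] at hq ⊢
    ext i; fin_cases i <;> simp [← hq]
  · rintro ⟨e, f⟩ hef hne
    rw [HasAntidiagonal.mem_antidiagonal] at hef
    rw [coeff_ofFun, if_neg, mul_zero]
    intro hf0
    refine hne ⟨(e 1, f 1), ?_, ?_⟩
    · simp [← hef]
    · ext i <;> fin_cases i <;> simp [hf0, ← hef]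
  · intro q _
    simp

theorem IsFDer.coeff_ssum {D : ℕ → k → k} {F : MvPowerSeries (Fin 2) k} (hFder : IsFDer D F)
    (u : k) (e : Fin 2 →₀ ℕ) : coeff e (ssum (fun n => D n u) F) = D (e 1) (D (e 0) u) :=
  (congr_fun (hFder u) e).symm

theorem fder_implies_weak_assoc_general {k : Type*} [CommRing k] (D : ℕ → k → k)
    (hD : IsHSDer D) (F : MvPowerSeries (Fin 2) k)
    (hFder : IsFDer D F) :
    ∀ a b c : k,
      ofFun (fun d : Fin 2 →₀ ℕ => D (d 1) (D (d 0) a * b) * c)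
        = ssum (fun n => D n a) F *
          ofFun (fun d : Fin 2 →₀ ℕ => if d 0 = 0 then D (d 1) b * c else 0) := by
  intro a b c
  ext d
  rw [coeff_ofFun, coeff_mul_ofFun_of_apply_zero_eq_zero _ fun n => D n b * c, hD.leibniz,
    Finset.sum_mul]
  refine sum_congr rfl fun q _ => ?_
  simp [hFder.coeff_ssum, mul_assoc]

/-- If D is an HS F-derivation then the vertex operators Y(u,z)v = Σ_n D_n(u) v z^n satisfy
weak associativity Y(Y(a,z)b,w)c = Y(a, F(z,w)) Y(b,w) c in k[[z,w]]. -/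
theorem fder_implies_weak_assoc {k : Type*} [CommRing k] (D : ℕ → k → k)
    (hD : IsHSDer D) (F : MvPowerSeries (Fin 2) k)
    (hzero : MvPowerSeries.constantCoeff F = 0)
    (hFder : IsFDer D F) :
    ∀ a b c : k,
      ofFun (fun d : Fin 2 →₀ ℕ => D (d 1) (D (d 0) a * b) * c)
        = ssum (fun n => D n a) F *
          ofFun (fun d : Fin 2 →₀ ℕ => if d 0 = 0 then D (d 1) b * c else 0) :=
  fder_implies_weak_assoc_general D hD F hFder

end HS
end

section
/- Let k be a commutative unital ring and D = (D_0, D_1, …) an iterative Hasse–Schmidt derivation of k. Define vertex operators Y(u,z)v := Σ_{n≥0} D_n(u)v z^n for u,v ∈ k. Then the 'skew-symmetry with translation' identity holds: Y(a,z)b = Σ_{n≥0} D_n( Y(b,−z)a evaluated coefficientwise ) z^n in the sense that Σ_{m≥0} D_m(a) b z^m = Σ_{n≥0} z^n Σ_{i+j=n} (−1)^j D_i( D_j(b) a ), for all a, b ∈ k. -/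
/-!
Expanding `D_i (D_j b * a)` by the Leibniz rule and iterativity turns the right-hand coefficient
into `Σ_{s + q = m} (Σ_{p + j = s} (-1)^j C(s, p)) D_s b * D_q a`. The inner sum is the
binomial expansion of `(1 - 1)^s`, so only `s = 0` survives, leaving `b * D_m a`.
-/

namespace HS
variable {k : Type*} [CommRing k] {σ : Type*}

open Finset

theorem _root_.Finset.sum_antidiagonal_antidiagonal_fst_comm {M : Type*} [AddCommMonoid M]
    (n : ℕ) (f : ℕ → ℕ → ℕ → M) :
    ∑ x ∈ antidiagonal n, ∑ y ∈ antidiagonal x.1, f y.1 y.2 x.2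
      = ∑ x ∈ antidiagonal n, ∑ y ∈ antidiagonal x.1, f y.1 x.2 y.2 := by
  simp only [sum_sigma']
  refine sum_nbij' (fun x => ⟨(x.2.1 + x.1.2, x.2.2), (x.2.1, x.1.2)⟩)
    (fun x => ⟨(x.2.1 + x.1.2, x.2.2), (x.2.1, x.1.2)⟩) ?_ ?_ ?_ ?_ ?_ <;>
    rintro ⟨⟨i, j⟩, p, q⟩ h <;> simp_all [HasAntidiagonal.mem_antidiagonal] <;> omega

theorem _root_.Finset.sum_antidiagonal_neg_one_pow_mul_choose {R : Type*} [Ring R] (s : ℕ) :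
    ∑ x ∈ antidiagonal s, (-1 : R) ^ x.2 * s.choose x.1 = 0 ^ s := by
  have h := (Commute.one_left (-1 : R)).add_pow' s
  rw [add_neg_cancel] at h
  simp [h, nsmul_eq_mul, Nat.cast_comm]

theorem _root_.Finset.sum_antidiagonal_zero_pow_mul {R : Type*} [Semiring R] (m : ℕ)
    (f : ℕ → ℕ → R) :
    ∑ x ∈ antidiagonal m, 0 ^ x.1 * f x.1 x.2 = f 0 m := by
  rw [Nat.sum_antidiagonal_eq_sum_range_succ (fun i j => 0 ^ i * f i j), sum_range_succ']
  simp

theorem IsHSDer.apply_apply_mul {D : ℕ → k → k} (hD : IsHSDer D) (hit : Iterative D)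
    (i j : ℕ) (u v : k) :
    D i (D j u * v)
      = ∑ y ∈ antidiagonal i, ((y.1 + j).choose y.1 : k) * D (y.1 + j) u * D y.2 v := by
  rw [hD.leibniz]
  exact sum_congr rfl fun y _ => by rw [hit, nsmul_eq_mul]

/-- Skew-symmetry for the vertex ring (k, D) attached to an iterative Hasse-Schmidt
derivation: Σ_m D_m(a) b z^m = Σ_n z^n Σ_{i+j=n} (-1)^j D_i(D_j(b) a) in k[[z]]. -/
theorem skew_symmetry {k : Type*} [CommRing k] (D : ℕ → k → k)
    (hD : IsHSDer D) (hit : Iterative D) (a b : k) :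
    PowerSeries.mk (fun m => D m a * b)
      = PowerSeries.mk (fun n => ∑ p ∈ Finset.HasAntidiagonal.antidiagonal n,
          (-1 : k) ^ p.2 * D p.1 (D p.2 b * a)) := by
  ext m
  simp only [PowerSeries.coeff_mk]
  calc D m a * b = D 0 b * D m a := by rw [hD.zeroth, mul_comm]
    _ = ∑ x ∈ antidiagonal m, 0 ^ x.1 * (D x.1 b * D x.2 a) :=
        (sum_antidiagonal_zero_pow_mul m fun i j => D i b * D j a).symm
    _ = ∑ x ∈ antidiagonal m, ∑ y ∈ antidiagonal x.1,
          (-1 : k) ^ y.2 * ((y.1 + y.2).choose y.1 * D (y.1 + y.2) b * D x.2 a) := by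
        refine sum_congr rfl fun x _ => ?_
        rw [← sum_antidiagonal_neg_one_pow_mul_choose, sum_mul]
        refine sum_congr rfl fun y hy => ?_
        rw [HasAntidiagonal.mem_antidiagonal.mp hy]
        ring
    _ = _ := by
        refine (sum_antidiagonal_antidiagonal_fst_comm m
          fun p j q => (-1 : k) ^ j * ((p + j).choose p * D (p + j) b * D q a)).trans ?_
        simp only [hD.apply_apply_mul hit, mul_sum]

end HS
end
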